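/- The Tammes problem for N = 6 (upper bound): for any 6 unit vectors in ℝ³, some pair of distinct vectors has inner product at least 0; i.e., the minimal angular separation of 6 points on S² is at most π/2 (attained by the octahedron). -/

import Mathlib

/-!
Vectors with pairwise negative inner products in an `n`-dimensional space number at most `n + 1`,
so six of them do not fit in `ℝ³`. Indeed, removing one of them, `v₀`, leaves a linearly
independent family: splitting a vanishing relation by the signs of its coefficients gives
`u = ∑ aᵢ • vᵢ = ∑ bⱼ • vⱼ` with `aᵢ, bⱼ ≥ 0` of disjoint supports, hence `⟪u, u⟫ ≤ 0`
and `u = 0`; pairing with `v₀`, which makes an obtuse angle with every `vᵢ`, then kills all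
coefficients.
-/

open scoped RealInnerProductSpace

open Module

section PairwiseObtuse

variable {ι E : Type*} [NormedAddCommGroup E] [InnerProductSpace ℝ E]

theorem inner_sum_smul_sum_smul_nonpos_of_pairwise_inner_nonpos {v : ι → E}
    (hv : Pairwise fun i j => ⟪v i, v j⟫ ≤ 0) (s : Finset ι) {a b : ι → ℝ}
    (ha : ∀ i, 0 ≤ a i) (hb : ∀ i, 0 ≤ b i) (hab : ∀ i, a i * b i = 0) :
    ⟪∑ i ∈ s, a i • v i, ∑ j ∈ s, b j • v j⟫ ≤ 0 := by
  simp only [sum_inner, inner_sum, real_inner_smul_left, real_inner_smul_right]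
  refine Finset.sum_nonpos fun j _ => Finset.sum_nonpos fun i _ => ?_
  rcases eq_or_ne i j with rfl | hij
  · rw [← mul_assoc, mul_comm (b i), hab, zero_mul]
  · exact mul_nonpos_of_nonneg_of_nonpos (hb j)
      (mul_nonpos_of_nonneg_of_nonpos (ha i) (hv hij))

theorem eq_zero_of_sum_smul_eq_zero_of_inner_neg {v : ι → E} {w : E} {s : Finset ι}
    (hw : ∀ i ∈ s, ⟪v i, w⟫ < 0) {c : ι → ℝ} (hc : ∀ i, 0 ≤ c i)
    (h : ∑ i ∈ s, c i • v i = 0) : ∀ i ∈ s, c i = 0 := by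
  have hsum : ∑ i ∈ s, c i * ⟪v i, w⟫ = 0 := by
    simpa [sum_inner, real_inner_smul_left] using congrArg (⟪·, w⟫) h
  have hterm := (Finset.sum_eq_zero_iff_of_nonpos fun i hi =>
    mul_nonpos_of_nonneg_of_nonpos (hc i) (hw i hi).le).1 hsum
  intro i hi
  exact (mul_eq_zero.1 (hterm i hi)).resolve_right (hw i hi).ne

theorem linearIndependent_of_pairwise_inner_nonpos_of_inner_neg {v : ι → E} {w : E}
    (hv : Pairwise fun i j => ⟪v i, v j⟫ ≤ 0) (hw : ∀ i, ⟪v i, w⟫ < 0) :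
    LinearIndependent ℝ v := by
  have hposPart_mul_negPart (r : ℝ) : r⁺ * r⁻ = 0 := by
    rcases le_total r 0 with hr | hr
    · simp [posPart_eq_zero.2 hr]
    · simp [negPart_eq_zero.2 hr]
  rw [linearIndependent_iff']
  intro s g hg i hi
  have hsplit : ∑ i ∈ s, (g i)⁺ • v i = ∑ i ∈ s, (g i)⁻ • v i := by
    rw [← sub_eq_zero, ← Finset.sum_sub_distrib]
    simpa only [← sub_smul, posPart_sub_negPart] using hg
  have hpos_zero : ∑ i ∈ s, (g i)⁺ • v i = 0 := by
    have h := inner_sum_smul_sum_smul_nonpos_of_pairwise_inner_nonpos hv s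
      (a := fun i => (g i)⁺) (b := fun i => (g i)⁻) (fun _ => posPart_nonneg _)
      (fun _ => negPart_nonneg _) fun _ => hposPart_mul_negPart _
    rwa [← hsplit, real_inner_self_nonpos] at h
  have hpos := eq_zero_of_sum_smul_eq_zero_of_inner_neg (fun i _ => hw i)
    (fun _ => posPart_nonneg _) hpos_zero
  have hneg := eq_zero_of_sum_smul_eq_zero_of_inner_neg (fun i _ => hw i)
    (fun _ => negPart_nonneg _) (hsplit ▸ hpos_zero)
  rw [← posPart_sub_negPart (g i), hpos i hi, hneg i hi, sub_zero]

theorem card_le_finrank_add_one_of_pairwise_inner_neg [FiniteDimensional ℝ E] [Fintype ι]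
    {v : ι → E} (hv : Pairwise fun i j => ⟪v i, v j⟫ < 0) :
    Fintype.card ι ≤ finrank ℝ E + 1 := by
  classical
  rcases isEmpty_or_nonempty ι with _ | ⟨⟨i₀⟩⟩
  · simp
  have hli := linearIndependent_of_pairwise_inner_nonpos_of_inner_neg
    (v := fun i : {i // i ≠ i₀} => v i) (w := v i₀)
    (fun i j hij => (hv (Subtype.coe_injective.ne hij)).le) fun i => hv i.2
  have hcard := hli.fintype_card_le_finrank
  rw [Fintype.card_subtype_compl, Fintype.card_subtype_eq] at hcard
  omega

end PairwiseObtuse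

theorem tammes_six_upper_general (x : Fin 6 → EuclideanSpace ℝ (Fin 3)) :
    ∃ i j, i ≠ j ∧ 0 ≤ ⟪x i, x j⟫ := by
  by_contra! h
  have hcard := card_le_finrank_add_one_of_pairwise_inner_neg (v := x) h
  simp [finrank_euclideanSpace] at hcard

/-- Tammes problem for N = 6, upper bound: among any 6 unit vectors in ℝ³,
some pair of distinct vectors has inner product at least 0, i.e. the minimal
angular separation of 6 points on S² is at most π/2 (the octahedron). -/
theorem tammes_six_upper (x : Fin 6 → EuclideanSpace ℝ (Fin 3))
    (hx : ∀ i, ‖x i‖ = 1) :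
    ∃ i j, i ≠ j ∧ 0 ≤ ⟪x i, x j⟫ :=
  tammes_six_upper_general x
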